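/- First Incompleteness Theorem relativized to the Halting Problem: let PA+H be Peano Arithmetic augmented with a fresh unary predicate H and, for each natural number x, the axiom H(x̄) if x codes a halting computation and ¬H(x̄) otherwise. If PA+H is consistent, then PA+H is incomplete. -/

import Mathlib

open FirstOrder FirstOrder.Language

/-- Function symbols of the language of arithmetic `{0, S, +, ×}`. -/
inductive ArithFunc : ℕ → Type
  | zero : ArithFunc 0
  | succ : ArithFunc 1
  | add : ArithFunc 2
  | mul : ArithFunc 2

/-- Relation symbols: a single fresh unary predicate `H`. -/
inductive HRel : ℕ → Type
  | H : HRel 1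

/-- The language of arithmetic extended by the unary predicate `H`. -/
def LH : Language := ⟨ArithFunc, HRel⟩

/-- The term `0`. -/
def zeroT {α : Type} : LH.Term α := Constants.term ArithFunc.zero

/-- The term `S t`. -/
def succT {α : Type} (t : LH.Term α) : LH.Term α := Functions.apply₁ ArithFunc.succ t

/-- The term `s + t`. -/
def addT {α : Type} (s t : LH.Term α) : LH.Term α := Functions.apply₂ ArithFunc.add s t

/-- The term `s × t`. -/
def mulT {α : Type} (s t : LH.Term α) : LH.Term α := Functions.apply₂ ArithFunc.mul s t

/-- The numeral `n̄ = S … S 0`. -/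
def num {α : Type} : ℕ → LH.Term α
  | 0 => zeroT
  | n + 1 => succT (num n)

/-- The `i`-th bounded variable as a term. -/
def v {α : Type} {n : ℕ} (i : Fin n) : LH.Term (α ⊕ Fin n) := Term.var (Sum.inr i)

/-- Axiom S0 : `∀ x, ¬ S x = 0`. -/
def axS0 : LH.Sentence := ∀' ∼(Term.bdEqual (succT (v 0)) zeroT)

/-- Axiom S1 : `∀ x y, S x = S y → x = y`. -/
def axS1 : LH.Sentence :=
  ∀' ∀' (Term.bdEqual (succT (v 0)) (succT (v 1)) ⟹ Term.bdEqual (v 0) (v 1))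

/-- Axiom S2 : `∀ x, x = 0 ∨ ∃ y, S y = x`. -/
def axS2 : LH.Sentence := ∀' (Term.bdEqual (v 0) zeroT ⊔ ∃' (Term.bdEqual (succT (v 1)) (v 0)))

/-- Axiom A0 : `∀ x, x + 0 = x`. -/
def axA0 : LH.Sentence := ∀' (Term.bdEqual (addT (v 0) zeroT) (v 0))

/-- Axiom A1 : `∀ x y, x + S y = S (x + y)`. -/
def axA1 : LH.Sentence :=
  ∀' ∀' (Term.bdEqual (addT (v 0) (succT (v 1))) (succT (addT (v 0) (v 1))))

/-- Axiom M0 : `∀ x, x × 0 = 0`. -/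
def axM0 : LH.Sentence := ∀' (Term.bdEqual (mulT (v 0) zeroT) zeroT)

/-- Axiom M1 : `∀ x y, x × S y = x + (x × y)`. -/
def axM1 : LH.Sentence :=
  ∀' ∀' (Term.bdEqual (mulT (v 0) (succT (v 1))) (addT (v 0) (mulT (v 0) (v 1))))

/-- Robinson Arithmetic (over the extended language). -/
def Q : LH.Theory := {axS0, axS1, axS2, axA0, axA1, axM0, axM1}

/-- The induction axiom for a formula `φ` (in the extended language, so induction is
available for formulas mentioning `H` as well). -/
def indAx (φ : LH.BoundedFormula Empty 1) : LH.Sentence :=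
  ((∀' (Term.bdEqual (v 0) zeroT ⟹ φ)) ⊓
      ∀' (φ ⟹ ∀' (Term.bdEqual (v 1) (succT (v 0)) ⟹ φ.liftAt 1 0))) ⟹ ∀' φ

/-- Peano Arithmetic over the extended language. -/
def PA : LH.Theory := Q ∪ Set.range indAx

/-- The atomic sentence `H(n̄)`. -/
def Hsent (n : ℕ) : LH.Sentence := Relations.boundedFormula₁ HRel.H (num n)

/-- `x` codes a halting computation: the machine coded by the first component of `x`
halts on the input given by the second component. -/
def halts (x : ℕ) : Prop :=
  (((Denumerable.ofNat Nat.Partrec.Code x.unpair.1).eval x.unpair.2)).Dom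

/-- `PA + H`: Peano Arithmetic augmented with the axiom `H(x̄)` for each `x` coding a
halting computation, and `¬ H(x̄)` for each `x` that does not. -/
def PAH : LH.Theory :=
  PA ∪ {A | ∃ x : ℕ, (halts x ∧ A = Hsent x) ∨ (¬ halts x ∧ A = (∼(Hsent x) : LH.Sentence))}

/-! ### Auxiliary machinery: standard models with varying interpretations of `H`. -/

/-- A copy of `ℕ`, tagged with a set `S` that will interpret `H`. -/
def NatH (_S : Set ℕ) : Type := ℕ

instance (S : Set ℕ) : Nonempty (NatH S) := ⟨(0 : ℕ)⟩

/-- The identity map `NatH S → ℕ`. -/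
def toN {S : Set ℕ} (a : NatH S) : ℕ := a

/-- The identity map `ℕ → NatH S`. -/
def ofN {S : Set ℕ} (a : ℕ) : NatH S := a

instance natHStructure (S : Set ℕ) : LH.Structure (NatH S) where
  funMap {n} f x :=
    match f with
    | ArithFunc.zero => ofN 0
    | ArithFunc.succ => ofN (toN (x 0) + 1)
    | ArithFunc.add => ofN (toN (x 0) + toN (x 1))
    | ArithFunc.mul => ofN (toN (x 0) * toN (x 1))
  RelMap {n} r x :=
    match r with
    | HRel.H => toN (x 0) ∈ S

section NatHRealize

variable {S : Set ℕ} {β : Type}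

@[simp] lemma realize_zeroT (w : β → NatH S) :
    toN (Term.realize w zeroT) = 0 := rfl

@[simp] lemma realize_succT (w : β → NatH S) (t : LH.Term β) :
    toN (Term.realize w (succT t)) = toN (Term.realize w t) + 1 := rfl

@[simp] lemma realize_addT (w : β → NatH S) (s t : LH.Term β) :
    toN (Term.realize w (addT s t)) = toN (Term.realize w s) + toN (Term.realize w t) := rfl

@[simp] lemma realize_mulT (w : β → NatH S) (s t : LH.Term β) :
    toN (Term.realize w (mulT s t)) = toN (Term.realize w s) * toN (Term.realize w t) := rfl

@[simp] lemma realize_num (w : β → NatH S) (n : ℕ) :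
    toN (Term.realize w (num n)) = n := by
  induction n with
  | zero => rfl
  | succ k ih => show toN (Term.realize w (num k)) + 1 = k + 1; rw [ih]

@[simp] lemma relMap_H (x : Fin 1 → NatH S) :
    Structure.RelMap (L := LH) (M := NatH S) HRel.H x ↔ toN (x 0) ∈ S := Iff.rfl

lemma fin1_eta (f : Fin 1 → NatH S) : f = fun _ => f 0 :=
  funext fun i => by fin_cases i; rfl

@[simp] lemma toN_ofN (a : ℕ) : toN (ofN a : NatH S) = a := rfl

@[simp] lemma natH_eq_iff {a b : NatH S} : a = b ↔ toN a = toN b := Iff.rfl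

lemma realize_congr1 {φ : LH.BoundedFormula Empty 1} {w : Empty → NatH S}
    {f g : Fin 1 → NatH S} (h : f 0 = g 0) (hf : φ.Realize w f) : φ.Realize w g := by
  have hfg : f = g := funext fun i => by fin_cases i; exact h
  rwa [hfg] at hf

end NatHRealize

/-- Every `NatH S` is a model of PA (full induction holds in the standard model for an
arbitrary interpretation of `H`). -/
lemma natH_models_PA (S : Set ℕ) : NatH S ⊨ PA := by
  rw [Theory.model_iff]
  intro A hA
  rcases hA with hQ | ⟨φ, rfl⟩
  · simp only [Q, Set.mem_insert_iff, Set.mem_singleton_iff] at hQ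
    rcases hQ with rfl | rfl | rfl | rfl | rfl | rfl | rfl
    · simp [axS0, Sentence.Realize, Formula.Realize, v, Fin.snoc]
    · simp [axS1, Sentence.Realize, Formula.Realize, v, Fin.snoc]
    · simp only [axS2, Sentence.Realize, Formula.Realize, BoundedFormula.realize_all,
        BoundedFormula.realize_sup, BoundedFormula.realize_ex, BoundedFormula.realize_bdEqual,
        Term.realize_var, Sum.elim_inr, natH_eq_iff, realize_zeroT, realize_succT]
      intro a
      show toN a = 0 ∨ ∃ b : NatH S, toN b + 1 = toN a
      rcases Nat.eq_zero_or_pos (toN a) with h | h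
      · exact Or.inl h
      · exact Or.inr ⟨ofN (toN a - 1), by show toN a - 1 + 1 = toN a; omega⟩
    · simp [axA0, Sentence.Realize, Formula.Realize, v, Fin.snoc]
    · simp only [axA1, Sentence.Realize, Formula.Realize, BoundedFormula.realize_all,
        BoundedFormula.realize_bdEqual]
      intro a b
      show ofN (toN a + (toN b + 1)) = ofN ((toN a + toN b) + 1)
      rfl
    · simp [axM0, Sentence.Realize, Formula.Realize, v, Fin.snoc]
    · simp only [axM1, Sentence.Realize, Formula.Realize, BoundedFormula.realize_all,
        BoundedFormula.realize_bdEqual]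
      intro a b
      show ofN (toN a * (toN b + 1)) = ofN (toN a + toN a * toN b)
      have : toN a * (toN b + 1) = toN a + toN a * toN b := by ring
      rw [this]
  · simp only [indAx, Sentence.Realize, Formula.Realize, BoundedFormula.realize_imp,
      BoundedFormula.realize_inf, BoundedFormula.realize_all, BoundedFormula.realize_bdEqual]
    rintro ⟨h0, hs⟩ x
    have key : ∀ n : ℕ, φ.Realize (default : Empty → NatH S) (fun _ : Fin 1 => ofN n) := by
      intro n
      induction n with
      | zero => exact realize_congr1 rfl (h0 (ofN 0) rfl)
      | succ k ih =>
        have h1 : φ.Realize default (Fin.snoc (default : Fin 0 → NatH S) (ofN k)) :=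
          realize_congr1 rfl ih
        have h := hs (ofN k) h1 (ofN (k + 1)) rfl
        rw [BoundedFormula.realize_liftAt (by norm_num)] at h
        exact realize_congr1 rfl h
    exact realize_congr1 rfl (key (toN x))

/-- `H(n̄)` holds in `NatH S` iff `n ∈ S`. -/
lemma natH_realize_Hsent (S : Set ℕ) (n : ℕ) : NatH S ⊨ Hsent n ↔ n ∈ S := by
  simp [Hsent, Sentence.Realize, Formula.Realize, BoundedFormula.realize_rel₁]
  show toN (Term.realize (Sum.elim (default : Empty → NatH S) (default : Fin 0 → NatH S))
    (num n : LH.Term (Empty ⊕ Fin 0))) ∈ S ↔ n ∈ S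
  rw [realize_num]

/-- The sentence `∃ x ∀ y (H y → ∃ z, z + y = x)` : "`H` is bounded". -/
def bddA : LH.Sentence :=
  ∃' ∀' (Relations.boundedFormula₁ HRel.H (v 1) ⟹
      ∃' (Term.bdEqual (addT (v 2) (v 1)) (v 0)))

lemma natH_realize_bddA (S : Set ℕ) :
    NatH S ⊨ bddA ↔ ∃ x : ℕ, ∀ y ∈ S, ∃ z : ℕ, z + y = x := by
  simp [bddA, Sentence.Realize, Formula.Realize, BoundedFormula.realize_ex,
    BoundedFormula.realize_all, BoundedFormula.realize_imp, BoundedFormula.realize_rel₁,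
    BoundedFormula.realize_bdEqual, v, Fin.snoc]
  exact ⟨fun ⟨a, h⟩ => ⟨toN a, fun y hy => h (ofN y) hy⟩,
    fun ⟨x, h⟩ => ⟨ofN x, fun b hb => h (toN b) hb⟩⟩

/-! ### The two ultraproduct models -/

/-- Bounded interpretations of `H`: the halting set cut off at `a`. -/
def S1 (a : ℕ) : Set ℕ := {m | halts m ∧ m ≤ a}

/-- Unbounded interpretations of `H`: the halting set together with everything above `a`. -/
def S2 (a : ℕ) : Set ℕ := {m | halts m ∨ a < m}

/-- Ultraproduct of the `NatH (S1 a)` over the hyperfilter. -/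
abbrev Mod1 : Type := (↑(Filter.hyperfilter ℕ) : Filter ℕ).Product fun a => NatH (S1 a)

/-- Ultraproduct of the `NatH (S2 a)` over the hyperfilter. -/
abbrev Mod2 : Type := (↑(Filter.hyperfilter ℕ) : Filter ℕ).Product fun a => NatH (S2 a)

lemma eventually_ge (x : ℕ) : ∀ᶠ a in (↑(Filter.hyperfilter ℕ) : Filter ℕ), x ≤ a := by
  have h : ∀ᶠ a in (Filter.cofinite : Filter ℕ), x ≤ a := by
    rw [Filter.eventually_cofinite]
    have : {a : ℕ | ¬ x ≤ a} = {a | a < x} := by ext a; simp [Nat.not_le]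
    rw [this]
    exact Set.finite_lt_nat x
  exact h.filter_mono (Filter.hyperfilter_le_cofinite)

lemma mod1_models : Mod1 ⊨ PAH := by
  rw [Theory.model_iff]
  intro A hA
  rw [Ultraproduct.sentence_realize]
  rcases hA with hPA | ⟨x, ⟨hx, rfl⟩ | ⟨hx, rfl⟩⟩
  · exact Filter.Eventually.of_forall fun a => (Theory.model_iff _).1 (natH_models_PA (S1 a)) A hPA
  · filter_upwards [eventually_ge x] with a ha
    exact (natH_realize_Hsent (S1 a) x).2 ⟨hx, ha⟩
  · refine Filter.Eventually.of_forall fun a => ?_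
    rw [Sentence.realize_not]
    intro h
    exact hx ((natH_realize_Hsent (S1 a) x).1 h).1

lemma mod2_models : Mod2 ⊨ PAH := by
  rw [Theory.model_iff]
  intro A hA
  rw [Ultraproduct.sentence_realize]
  rcases hA with hPA | ⟨x, ⟨hx, rfl⟩ | ⟨hx, rfl⟩⟩
  · exact Filter.Eventually.of_forall fun a => (Theory.model_iff _).1 (natH_models_PA (S2 a)) A hPA
  · exact Filter.Eventually.of_forall fun a => (natH_realize_Hsent (S2 a) x).2 (Or.inl hx)
  · filter_upwards [eventually_ge x] with a ha
    rw [Sentence.realize_not]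
    intro h
    rcases (natH_realize_Hsent (S2 a) x).1 h with h' | h'
    · exact hx h'
    · omega

lemma mod1_bddA : Mod1 ⊨ bddA := by
  rw [Ultraproduct.sentence_realize]
  refine Filter.Eventually.of_forall fun a => (natH_realize_bddA (S1 a)).2 ⟨a, fun y hy => ?_⟩
  exact ⟨a - y, by have := hy.2; omega⟩

lemma mod2_not_bddA : ¬ Mod2 ⊨ bddA := by
  rw [Ultraproduct.sentence_realize]
  intro h
  obtain ⟨a, ha⟩ := h.exists
  obtain ⟨x, hx⟩ := (natH_realize_bddA (S2 a)).1 ha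
  obtain ⟨z, hz⟩ := hx (x + a + 1) (Or.inr (by omega))
  omega

/-- The First Incompleteness Theorem relativized to the Halting Problem: if `PA + H` is
consistent then it is incomplete. -/
theorem incompleteness_PA_halting
    (hcons : ¬ ∃ A : LH.Sentence, PAH ⊨ᵇ A ∧ PAH ⊨ᵇ (∼A : LH.Sentence)) :
    ∃ A : LH.Sentence, ¬ PAH ⊨ᵇ A ∧ ¬ PAH ⊨ᵇ (∼A : LH.Sentence) := by
  refine ⟨bddA, fun h => ?_, fun h => ?_⟩
  · haveI : Mod2 ⊨ PAH := mod2_models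
    exact mod2_not_bddA (h.realize_sentence Mod2)
  · haveI : Mod1 ⊨ PAH := mod1_models
    have h2 := h.realize_sentence Mod1
    rw [Sentence.realize_not] at h2
    exact h2 mod1_bddA
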